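/- Let k ≥ 1 and let G = [1, 43+27k+4k²] ∪ {80+51k+8k², 85+53k+8k², 86+53k+8k²}. Then for all n > 11+4k, the n-fold sumset of A = (86+53k+8k²) - G equals the interval [0, (85+53k+8k²)n], and consequently β_G(n) = (4k²+27k+46) - (k+5)n < 0. -/
import Mathlib


open Pointwise

private lemma aux_add {A : Finset ℕ} {x y s t : ℕ} (hx : x ∈ s • A) (hy : y ∈ t • A) :
    x + y ∈ (s + t) • A := by
  rw [add_nsmul]; exact Finset.add_mem_add hx hy

private lemma aux_mul_mem {A : Finset ℕ} {v : ℕ} (hv : v ∈ A) : ∀ j : ℕ, j * v ∈ j • A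
  | 0 => by simp [zero_nsmul]
  | (j + 1) => by
      rw [succ_nsmul, Nat.succ_mul]
      exact Finset.add_mem_add (aux_mul_mem hv j) hv

private lemma aux_Icc_add_Icc (a b c d : ℕ) (h1 : a ≤ b) (h2 : c ≤ d) :
    Finset.Icc a b + Finset.Icc c d = Finset.Icc (a + c) (b + d) := by
  ext x
  simp only [Finset.mem_add, Finset.mem_Icc]
  constructor
  · rintro ⟨y, hy, z, hz, rfl⟩; omega
  · intro h
    exact ⟨min b (max a (x - d)), by omega, x - min b (max a (x - d)), by omega, by omega⟩

private lemma aux_Icc_nsmul (a b : ℕ) (hab : a ≤ b) :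
    ∀ j, 1 ≤ j → j • Finset.Icc a b = Finset.Icc (j * a) (j * b)
  | 1, _ => by simp [one_nsmul]
  | (j + 2), _ => by
      rw [succ_nsmul, aux_Icc_nsmul a b hab (j + 1) (by omega),
        aux_Icc_add_Icc _ _ _ _ (by nlinarith) hab]
      ring_nf

private lemma aux_sub_injOn (P : ℕ) : ∀ a ≤ P, ∀ b ≤ P, P - a = P - b → a = b := by
  intro a ha b hb h; omega

private lemma aux_image (M : ℕ) (G : Finset ℕ) (hGub : ∀ x ∈ G, x ≤ M) :
    ∀ n, 1 ≤ n → (∀ y ∈ n • G, y ≤ n * M) ∧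
      (n • G).image (fun x => n * M - x) = n • (G.image fun x => M - x)
  | 1, _ => by
      simp only [one_nsmul, one_mul]
      exact ⟨hGub, trivial⟩
  | (n + 2), _ => by
      obtain ⟨ihb, ihe⟩ := aux_image M G hGub (n + 1) (by omega)
      have hsucc : (n + 2) • G = (n + 1) • G + G := succ_nsmul G (n + 1)
      constructor
      · intro y hy
        rw [hsucc, Finset.mem_add] at hy
        obtain ⟨a, ha, b, hb, rfl⟩ := hy
        have := ihb a ha
        have := hGub b hb
        nlinarith
      · rw [hsucc, succ_nsmul (G.image fun x => M - x), ← ihe]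
        ext x
        simp only [Finset.mem_image, Finset.mem_add]
        constructor
        · rintro ⟨y, ⟨a, ha, b, hb, rfl⟩, rfl⟩
          have h1 := ihb a ha
          have h2 := hGub b hb
          refine ⟨(n + 1) * M - a, ⟨a, ha, rfl⟩, M - b, ⟨b, hb, rfl⟩, ?_⟩
          have : (n + 2) * M = (n + 1) * M + M := by ring
          omega
        · rintro ⟨y, ⟨a, ha, rfl⟩, z, ⟨b, hb, rfl⟩, rfl⟩
          have h1 := ihb a ha
          have h2 := hGub b hb
          refine ⟨a + b, ⟨a, ha, b, hb, rfl⟩, ?_⟩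
          have : (n + 2) * M = (n + 1) * M + M := by ring
          omega

theorem stmt19 (k : ℕ) (hk : 1 ≤ k)
    (G : Finset ℕ)
    (hG : G = Finset.Icc 1 (43 + 27 * k + 4 * k ^ 2) ∪
      {80 + 51 * k + 8 * k ^ 2, 85 + 53 * k + 8 * k ^ 2, 86 + 53 * k + 8 * k ^ 2})
    (A : Finset ℕ) (hA : A = G.image (fun x => 86 + 53 * k + 8 * k ^ 2 - x)) :
    ∀ n : ℕ, 11 + 4 * k < n →
      n • A = Finset.Icc 0 ((85 + 53 * k + 8 * k ^ 2) * n) ∧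
      ((n • G).card : ℤ) - (2 * n - 1) * ((G.card : ℤ) - 1) =
        (4 * (k : ℤ) ^ 2 + 27 * k + 46) - (k + 5) * n ∧
      ((n • G).card : ℤ) - (2 * n - 1) * ((G.card : ℤ) - 1) < 0 := by
  intro n hn
  -- replace k^2 by a fresh variable q, remembering needed nonlinear facts
  have hq2 : 42 + 26 * k + 4 * k ^ 2 = (6 + 2 * k) * (7 + 2 * k) := by ring
  obtain ⟨q, hq⟩ : ∃ q, k ^ 2 = q := ⟨_, rfl⟩
  have hqZ : (q : ℤ) = (k : ℤ) ^ 2 := by rw [← hq]; push_cast; ring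
  rw [hq] at hG hA hq2
  set u : ℕ := 6 + 2 * k with hu
  set c : ℕ := 43 + 26 * k + 4 * q with hc
  set m : ℕ := 85 + 53 * k + 8 * q with hm
  set M : ℕ := 86 + 53 * k + 8 * q with hM
  -- basic memberships of A
  have hmem : ∀ x, x ∈ G ↔ ((1 ≤ x ∧ x ≤ 43 + 27 * k + 4 * q) ∨ x = 80 + 51 * k + 8 * q ∨
      x = m ∨ x = M) := by
    intro x
    simp only [hG, Finset.mem_union, Finset.mem_Icc, Finset.mem_insert, Finset.mem_singleton]
  have h0A : 0 ∈ A := by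
    rw [hA]
    exact Finset.mem_image.2 ⟨M, (hmem M).2 (by omega), by omega⟩
  have h1A : 1 ∈ A := by
    rw [hA]
    exact Finset.mem_image.2 ⟨m, (hmem m).2 (by omega), by omega⟩
  have huA : u ∈ A := by
    rw [hA]
    exact Finset.mem_image.2 ⟨80 + 51 * k + 8 * q, (hmem _).2 (by omega), by omega⟩
  have hIccA : Finset.Icc c m ⊆ A := by
    intro x hx
    rw [Finset.mem_Icc] at hx
    rw [hA]
    exact Finset.mem_image.2 ⟨M - x, (hmem _).2 (by omega), by omega⟩
  have hAub : ∀ x ∈ A, x ≤ m := by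
    intro x hx
    rw [hA, Finset.mem_image] at hx
    obtain ⟨g, hg, rfl⟩ := hx
    rw [hmem] at hg
    omega
  have hGub : ∀ x ∈ G, x ≤ M := by
    intro x hx; rw [hmem] at hx; omega
  have hcm : c ≤ m := by omega
  have hn1 : 1 ≤ n := by omega
  -- main sumset equality
  have hmain : n • A = Finset.Icc 0 (m * n) := by
    apply Finset.Subset.antisymm
    · have h1 : A ⊆ Finset.Icc 0 m := fun x hx => Finset.mem_Icc.2 ⟨Nat.zero_le _, hAub x hx⟩
      calc n • A ⊆ n • Finset.Icc 0 m := by gcongr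
        _ = Finset.Icc (n * 0) (n * m) := aux_Icc_nsmul 0 m (Nat.zero_le m) n hn1
        _ = Finset.Icc 0 (m * n) := by rw [Nat.mul_zero, Nat.mul_comm]
    · intro x hx
      rw [Finset.mem_Icc] at hx
      by_cases hxc : x < c
      · -- small case : x = a·1 + b·u with a + b ≤ n
        set b : ℕ := x / u with hb
        set a : ℕ := x % u with ha
        have hdm : u * b + a = x := Nat.div_add_mod x u
        have hau : a < u := Nat.mod_lt x (by omega)
        have hble : b ≤ 7 + 2 * k := by
          have hx' : x ≤ u * (7 + 2 * k) := by
            have : x ≤ 42 + 26 * k + 4 * q := by omega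
            calc x ≤ 42 + 26 * k + 4 * q := this
              _ = u * (7 + 2 * k) := hq2
          calc b = x / u := hb
            _ ≤ u * (7 + 2 * k) / u := Nat.div_le_div_right hx'
            _ = 7 + 2 * k := Nat.mul_div_cancel_left _ (by omega)
        have habn : a + b ≤ n := by omega
        have m1 : a * 1 ∈ a • A := aux_mul_mem h1A a
        have m2 : b * u ∈ b • A := aux_mul_mem huA b
        have m3 : (n - (a + b)) * 0 ∈ (n - (a + b)) • A := aux_mul_mem h0A _
        have hsum' := aux_add (aux_add m1 m2) m3
        have hne : a + b + (n - (a + b)) = n := by omega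
        rw [hne] at hsum'
        have hval : a * 1 + b * u + (n - (a + b)) * 0 = x := by
          rw [Nat.mul_one, Nat.mul_zero, Nat.add_zero, Nat.mul_comm b u]
          omega
        rwa [hval] at hsum'
      · -- large case : x ∈ i • [c, m]
        push_neg at hxc
        set d : ℕ := x / c with hd
        set r : ℕ := x % c with hr
        have hdm : c * d + r = x := Nat.div_add_mod x c
        have hrc : r < c := Nat.mod_lt x (by omega)
        have hd1 : 1 ≤ d := by
          rcases Nat.eq_zero_or_pos d with h | h
          · rw [h, Nat.mul_zero] at hdm; omega
          · exact h
        have hm2c : 2 * c ≤ m := by omega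
        obtain ⟨i, hi1, hin, hicx, hxim⟩ :
            ∃ i, 1 ≤ i ∧ i ≤ n ∧ i * c ≤ x ∧ x ≤ i * m := by
          by_cases hdn : d ≤ n
          · refine ⟨d, hd1, hdn, by linarith [hdm], ?_⟩
            have h5 : d * (2 * c) ≤ d * m := Nat.mul_le_mul_left d hm2c
            have h6 : 1 * c ≤ d * c := Nat.mul_le_mul_right c hd1
            nlinarith
          · push_neg at hdn
            refine ⟨n, hn1, le_refl n, ?_, by linarith [hx.2]⟩
            have : c * n ≤ c * d := Nat.mul_le_mul_left c (by omega)
            nlinarith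
        have hxmem : x ∈ i • Finset.Icc c m := by
          rw [aux_Icc_nsmul c m hcm i hi1, Finset.mem_Icc]
          exact ⟨hicx, hxim⟩
        have hxA : x ∈ i • A := by
          have : i • Finset.Icc c m ⊆ i • A := by gcongr
          exact this hxmem
        have m3 : (n - i) * 0 ∈ (n - i) • A := aux_mul_mem h0A _
        have hsum := aux_add hxA m3
        have hne : i + (n - i) = n := by omega
        rw [hne] at hsum
        rwa [Nat.mul_zero, Nat.add_zero] at hsum
  -- cardinalities
  obtain ⟨hbound, himg⟩ := aux_image M G hGub n hn1
  have hA' : G.image (fun x => M - x) = A := by rw [hA]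
  rw [hA'] at himg
  have hcardnG : (n • G).card = m * n + 1 := by
    have : ((n • G).image (fun x => n * M - x)).card = (n • G).card :=
      Finset.card_image_of_injOn (fun a ha b hb h =>
        aux_sub_injOn (n * M) a (hbound a ha) b (hbound b hb) h)
    rw [himg, hmain] at this
    rw [← this, Nat.card_Icc]
    omega
  have hcardG : G.card = 46 + 27 * k + 4 * q := by
    rw [hG]
    rw [Finset.card_union_of_disjoint (by
      simp only [Finset.disjoint_left, Finset.mem_Icc, Finset.mem_insert, Finset.mem_singleton]
      intro x hx h
      omega)]
    rw [Nat.card_Icc]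
    have : ({80 + 51 * k + 8 * q, 85 + 53 * k + 8 * q, 86 + 53 * k + 8 * q} : Finset ℕ).card
        = 3 := by
      rw [Finset.card_insert_of_notMem (by
          simp only [Finset.mem_insert, Finset.mem_singleton]; omega),
        Finset.card_insert_of_notMem (by
          simp only [Finset.mem_singleton]; omega), Finset.card_singleton]
    rw [this]
    omega
  refine ⟨by rw [hmain, hm, ← hq], ?_, ?_⟩
  · rw [hcardnG, hcardG, hm]
    push_cast
    rw [hqZ]
    ring
  · rw [hcardnG, hcardG, hm]
    have hnk : (12 + 4 * (k : ℤ)) ≤ (n : ℤ) := by exact_mod_cast (by omega : 12 + 4 * k ≤ n)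
    have hp : ((k : ℤ) + 5) * (12 + 4 * k) ≤ ((k : ℤ) + 5) * n :=
      mul_le_mul_of_nonneg_left hnk (by positivity)
    push_cast
    rw [hqZ]
    nlinarith [sq_nonneg ((k : ℤ))]
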